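/- arXiv:1509.09107 — 2 statements merged into one kernel-verified Lean document; each statement's English description precedes it below -/
import Mathlib

section
/- Let H : ]1,∞[ → [0,∞) satisfy: (i) p ↦ p(1 + H(p)^{1/p}) is non-decreasing, and (ii) for every p, limsup_{s→p} H(s) ≤ H(p). Then H is right-continuous at every p ∈ ]1,∞[, i.e., lim_{s→p⁺} H(s) = H(p), and limsup_{s→p} H(s) = H(p). -/
open Set Filter Topology

theorem stmt4 (H : ℝ → ℝ) (hnonneg : ∀ p, 1 < p → 0 ≤ H p)
    (hmono : ∀ p s, 1 < p → p ≤ s → p * (1 + H p ^ (1 / p)) ≤ s * (1 + H s ^ (1 / s)))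
    (hlimsup : ∀ p, 1 < p → Filter.limsup H (𝓝[Set.Ioi 1 \ {p}] p) ≤ H p) :
    ∀ p, 1 < p → Tendsto H (𝓝[>] p) (𝓝 (H p)) ∧
      Filter.limsup H (𝓝[Set.Ioi 1 \ {p}] p) = H p := by
  intro p hp
  have hp0 : 0 < p := by linarith
  set T : ℝ := p + 1 with hTdef
  have hT1 : 1 < T := by simp only [hTdef]; linarith
  have hpT : p < T := by simp [hTdef]
  set q : ℝ := (1 + p) / 2 with hqdef
  have hq1 : 1 < q := by simp only [hqdef]; linarith
  have hq0 : 0 < q := by linarith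
  have hqp : q < p := by simp only [hqdef]; linarith
  set C : ℝ := T / q * (1 + H T ^ (1 / T)) - 1 with hCdef
  set M : ℝ := (C + 1) ^ T with hMdef
  -- upper bound on Ioo q T
  have hupper : ∀ s, q < s → s < T → H s ≤ M := by
    intro s hqs hsT
    have hs1 : 1 < s := lt_trans hq1 hqs
    have hs0 : 0 < s := by linarith
    have hHs : 0 ≤ H s := hnonneg s hs1
    have hrnn : 0 ≤ H s ^ (1 / s) := Real.rpow_nonneg hHs _
    have hm := hmono s T hs1 (le_of_lt hsT)
    have hTn : 0 ≤ H T ^ (1 / T) := Real.rpow_nonneg (hnonneg T hT1) _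
    have h3 : 1 + H s ^ (1 / s) ≤ T / q * (1 + H T ^ (1 / T)) := by
      rw [div_mul_eq_mul_div, le_div_iff₀ hq0]
      nlinarith [mul_nonneg (by linarith : (0:ℝ) ≤ s - q)
        (by linarith : (0:ℝ) ≤ 1 + H s ^ (1 / s))]
    have hbase : H s ^ (1 / s) ≤ C := by simp only [hCdef]; linarith
    have hC0 : 0 ≤ C := hrnn.trans hbase
    have hHseq : H s = (H s ^ (1 / s)) ^ s := by
      rw [← Real.rpow_mul hHs, one_div_mul_cancel (ne_of_gt hs0), Real.rpow_one]
    rw [hHseq]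
    calc (H s ^ (1 / s)) ^ s ≤ (C + 1) ^ s :=
          Real.rpow_le_rpow hrnn (by linarith) (le_of_lt hs0)
      _ ≤ (C + 1) ^ T := Real.rpow_le_rpow_of_exponent_le (by linarith) (le_of_lt hsT)
  -- lower bound function
  set b : ℝ → ℝ := fun s => max (p / s * (1 + H p ^ (1 / p)) - 1) 0 with hbdef
  set g : ℝ → ℝ := fun s => b s ^ s with hgdef
  have hHp0 : 0 ≤ H p := hnonneg p hp
  have hA : 0 ≤ H p ^ (1 / p) := Real.rpow_nonneg hHp0 _
  have hlow : ∀ s, p < s → g s ≤ H s := by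
    intro s hps
    have hs1 : 1 < s := lt_trans hp hps
    have hs0 : 0 < s := by linarith
    have hHs : 0 ≤ H s := hnonneg s hs1
    have hrnn : 0 ≤ H s ^ (1 / s) := Real.rpow_nonneg hHs _
    have hm := hmono p s hp (le_of_lt hps)
    have hb : b s ≤ H s ^ (1 / s) := by
      apply max_le _ hrnn
      rw [div_mul_eq_mul_div, sub_le_iff_le_add, div_le_iff₀ hs0]
      nlinarith
    have hHseq : H s = (H s ^ (1 / s)) ^ s := by
      rw [← Real.rpow_mul hHs, one_div_mul_cancel (ne_of_gt hs0), Real.rpow_one]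
    rw [hHseq]
    exact Real.rpow_le_rpow (le_max_right _ _) hb (le_of_lt hs0)
  -- tendsto of b at p from the right
  have hid : Tendsto (fun s : ℝ => s) (𝓝[>] p) (𝓝 p) :=
    tendsto_id.mono_left nhdsWithin_le_nhds
  have hbtend : Tendsto b (𝓝[>] p) (𝓝 (H p ^ (1 / p))) := by
    have h1 : Tendsto (fun s : ℝ => p / s * (1 + H p ^ (1 / p)) - 1) (𝓝[>] p)
        (𝓝 (p / p * (1 + H p ^ (1 / p)) - 1)) :=
      (((tendsto_const_nhds.div hid (ne_of_gt hp0)).mul tendsto_const_nhds).sub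
        tendsto_const_nhds)
    have h2 := h1.max (tendsto_const_nhds (x := (0:ℝ)))
    have : max (p / p * (1 + H p ^ (1 / p)) - 1) 0 = H p ^ (1 / p) := by
      rw [div_self (ne_of_gt hp0), one_mul]
      rw [max_eq_left (by linarith)]; ring
    rwa [this] at h2
  have hgtend : Tendsto g (𝓝[>] p) (𝓝 (H p)) := by
    have h := hbtend.rpow hid (Or.inr hp0)
    have : (H p ^ (1 / p)) ^ p = H p := by
      rw [← Real.rpow_mul hHp0, one_div_mul_cancel (ne_of_gt hp0), Real.rpow_one]
    rwa [this] at h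
  -- eventual bounds
  have hIoo : Ioo p T ∈ 𝓝[>] p := Ioo_mem_nhdsGT_of_mem ⟨le_refl p, hpT⟩
  have hevub : ∀ᶠ s in 𝓝[>] p, H s ≤ M := by
    filter_upwards [hIoo] with s hs
    exact hupper s (lt_trans hqp hs.1) hs.2
  have hevlb : ∀ᶠ s in 𝓝[>] p, (0:ℝ) ≤ H s := by
    filter_upwards [self_mem_nhdsWithin] with s hs
    exact hnonneg s (lt_trans hp hs)
  have hevg : ∀ᶠ s in 𝓝[>] p, g s ≤ H s := by
    filter_upwards [self_mem_nhdsWithin] with s hs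
    exact hlow s hs
  have hbddab : IsBoundedUnder (· ≤ ·) (𝓝[>] p) H := ⟨M, by simpa using hevub⟩
  have hbddbe : IsBoundedUnder (· ≥ ·) (𝓝[>] p) H := ⟨0, by simpa using hevlb⟩
  have hcobdd : IsCoboundedUnder (· ≤ ·) (𝓝[>] p) H := hbddbe.isCoboundedUnder_le
  have hcobddge : IsCoboundedUnder (· ≥ ·) (𝓝[>] p) H := hbddab.isCoboundedUnder_ge
  -- punctured filter
  have hle : 𝓝[>] p ≤ 𝓝[Set.Ioi 1 \ {p}] p :=
    nhdsWithin_mono p (fun s hs => ⟨lt_trans hp hs, by simpa using hs.ne'⟩)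
  have hIooN : Ioo q T ∈ 𝓝[Set.Ioi 1 \ {p}] p :=
    mem_nhdsWithin_of_mem_nhds (Ioo_mem_nhds hqp hpT)
  have hbddpunct : IsBoundedUnder (· ≤ ·) (𝓝[Set.Ioi 1 \ {p}] p) H := by
    refine ⟨M, ?_⟩
    rw [eventually_map]
    filter_upwards [hIooN] with s hs
    exact hupper s hs.1 hs.2
  -- limsup on the right ≤ H p
  have hlimsupR : limsup H (𝓝[>] p) ≤ H p :=
    (limsup_le_limsup_of_le hle hcobdd hbddpunct).trans (hlimsup p hp)
  -- liminf on the right ≥ H p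
  have hliminfR : H p ≤ liminf H (𝓝[>] p) := by
    have : liminf g (𝓝[>] p) = H p := hgtend.liminf_eq
    rw [← this]
    exact liminf_le_liminf hevg hgtend.isBoundedUnder_ge hcobddge
  have htend : Tendsto H (𝓝[>] p) (𝓝 (H p)) :=
    tendsto_of_le_liminf_of_limsup_le hliminfR hlimsupR hbddab hbddbe
  refine ⟨htend, le_antisymm (hlimsup p hp) ?_⟩
  have heq : limsup H (𝓝[>] p) = H p := htend.limsup_eq
  rw [← heq]
  exact limsup_le_limsup_of_le hle hcobdd hbddpunct
end

section
/- Let Ω be a bounded open set in ℝⁿ, and suppose for each p in an open interval I ⊆ ]1,∞[ we are given u_p ∈ W^{1,p}_0(Ω) with 0 ≤ u_p(x) ≤ c d(x)^{α} and |∇u_p(x)| ≤ c d(x)^{α−1} a.e., where c > 0 and α ∈ ]0,1[ are independent of p, and ∫_Ω |u_p|^p/d^p dx = 1. If moreover ∫_Ω d^{-β} dx < ∞ for all β < 1, then for any p₀ ∈ I with p₀(1−α) < 1 and any sequence p_n → p₀ with u_{p_n} → ũ a.e. in Ω, one has ∫_Ω |ũ|^{p₀}/d^{p₀} dx = 1.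 -/
/-!
Pointwise, `|u_p|^p / d^p ≤ c^p d^{(α-1)p}`, and for `p` close to `p₀` the exponent `(α-1)p` lies
in `[-β, 0]` for a fixed `β < 1`. Hence `|u_p|^p / d^p ≤ C (d^{-β} + 1)`, an integrable bound
independent of `p`, and dominated convergence carries the normalisation `∫ |u_p|^p / d^p = 1`
to the limit.
-/

open MeasureTheory Set Filter Topology

theorem Real.rpow_le_rpow_add_rpow {x a b e : ℝ} (hx : 0 < x) (hae : a ≤ e) (heb : e ≤ b) :
    x ^ e ≤ x ^ a + x ^ b := by
  rcases le_total x 1 with hx1 | hx1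
  · linarith [Real.rpow_le_rpow_of_exponent_ge hx hx1 hae, Real.rpow_nonneg hx.le b]
  · linarith [Real.rpow_le_rpow_of_exponent_le hx1 heb, Real.rpow_nonneg hx.le a]

theorem abs_rpow_div_rpow_le_of_le_mul_rpow {u d c α p q β : ℝ} (hd : 0 ≤ d) (hu₀ : 0 ≤ u)
    (hu : u ≤ c * d ^ α) (hc : 0 ≤ c) (hp : 0 < p) (hpq : p ≤ q) (hα : α ≤ 1)
    (hβ : (1 - α) * p ≤ β) :
    |u| ^ p / d ^ p ≤ max c 1 ^ q * (d ^ (-β) + 1) := by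
  rcases hd.eq_or_lt with rfl | hd
  · rw [Real.zero_rpow hp.ne', div_zero]
    positivity
  have hc_le : c ^ p ≤ max c 1 ^ q :=
    (Real.rpow_le_rpow hc (le_max_left c 1) hp.le).trans
      (Real.rpow_le_rpow_of_exponent_le (le_max_right c 1) hpq)
  have hd_le : d ^ ((α - 1) * p) ≤ d ^ (-β) + d ^ (0 : ℝ) :=
    Real.rpow_le_rpow_add_rpow hd (by linarith) (by nlinarith)
  calc |u| ^ p / d ^ p ≤ (c * d ^ α) ^ p / d ^ p := by
        gcongr
        rwa [abs_of_nonneg hu₀]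
    _ = c ^ p * d ^ ((α - 1) * p) := by
        rw [Real.mul_rpow hc (by positivity), ← Real.rpow_mul hd.le, mul_div_assoc,
          ← Real.rpow_sub hd]
        ring_nf
    _ ≤ max c 1 ^ q * (d ^ (-β) + 1) := by
        rw [Real.rpow_zero] at hd_le
        gcongr

theorem tendsto_abs_rpow_div_rpow {ι : Type*} {l : Filter ι} {f q : ι → ℝ} {a p d : ℝ}
    (hd : 0 ≤ d) (hp : 0 < p) (hf : Tendsto f l (𝓝 a)) (hq : Tendsto q l (𝓝 p)) :
    Tendsto (fun i => |f i| ^ q i / d ^ q i) l (𝓝 (|a| ^ p / d ^ p)) := by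
  simp_rw [← Real.div_rpow (abs_nonneg _) hd]
  exact (hf.abs.div_const d).rpow hq (Or.inr hp)

theorem integral_eq_of_dominated_of_integral_eq {α ι G : Type*} [MeasurableSpace α]
    [NormedAddCommGroup G] [NormedSpace ℝ G] {μ : Measure α} {l : Filter ι} [l.NeBot]
    [l.IsCountablyGenerated] {F : ι → α → G} {f : α → G} {r : G} (bound : α → ℝ) (hr : r ≠ 0)
    (hF : ∀ᶠ i in l, ∫ a, F i a ∂μ = r) (h_bound : ∀ᶠ i in l, ∀ᵐ a ∂μ, ‖F i a‖ ≤ bound a)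
    (bound_integrable : Integrable bound μ)
    (h_lim : ∀ᵐ a ∂μ, Tendsto (fun i => F i a) l (𝓝 (f a))) :
    ∫ a, f a ∂μ = r := by
  -- The Bochner integral of a non-integrable function is `0 ≠ r`, so measurability is automatic.
  have hF_meas : ∀ᶠ i in l, AEStronglyMeasurable (F i) μ :=
    hF.mono fun i hi => (Integrable.of_integral_ne_zero (hi ▸ hr)).aestronglyMeasurable
  exact tendsto_nhds_unique ((tendsto_integral_filter_of_dominated_convergence bound hF_meas
    h_bound bound_integrable h_lim).congr' hF) tendsto_const_nhds

theorem stmt18_general {n : ℕ} (Ω : Set (EuclideanSpace ℝ (Fin n)))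
    (d : EuclideanSpace ℝ (Fin n) → ℝ) (hd : ∀ x, d x = Metric.infDist x (frontier Ω))
    (I : Set ℝ) (hI1 : I ⊆ Set.Ioi 1)
    (c α : ℝ) (hc : 0 < c) (hα : α ∈ Set.Ioo (0 : ℝ) 1)
    (u : ℝ → EuclideanSpace ℝ (Fin n) → ℝ)
    (hbound : ∀ p ∈ I, ∀ᵐ x ∂(volume.restrict Ω),
      0 ≤ u p x ∧ u p x ≤ c * d x ^ α ∧ ‖fderiv ℝ (u p) x‖ ≤ c * d x ^ (α - 1))
    (hnorm : ∀ p ∈ I, (∫ x in Ω, |u p x| ^ p / d x ^ p) = 1)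
    (hint : ∀ β : ℝ, β < 1 → IntegrableOn (fun x => d x ^ (-β)) Ω)
    (p₀ : ℝ) (hp₀ : p₀ ∈ I) (hα₀ : p₀ * (1 - α) < 1)
    (pn : ℕ → ℝ) (hpn : ∀ n, pn n ∈ I) (hpnlim : Tendsto pn atTop (𝓝 p₀))
    (u₀ : EuclideanSpace ℝ (Fin n) → ℝ)
    (hae : ∀ᵐ x ∂(volume.restrict Ω), Tendsto (fun n => u (pn n) x) atTop (𝓝 (u₀ x))) :
    (∫ x in Ω, |u₀ x| ^ p₀ / d x ^ p₀) = 1 := by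
  have hd₀ : ∀ x, 0 ≤ d x := fun x => (hd x).symm ▸ Metric.infDist_nonneg
  have hpos : ∀ p ∈ I, 0 < p := fun p hp => one_pos.trans (hI1 hp)
  have hα1 : 0 < 1 - α := sub_pos.2 hα.2
  obtain ⟨β, hp₀β, hβ1⟩ := exists_between hα₀
  rw [← lt_div_iff₀ hα1] at hp₀β
  have hclose : ∀ᶠ k in atTop, pn k ≤ β / (1 - α) ∧ pn k ≤ p₀ + 1 :=
    hpnlim.eventually (eventually_le_nhds hp₀β) |>.and
      (hpnlim.eventually (eventually_le_nhds (lt_add_one p₀)))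
  have hbound_int : Integrable (fun x => max c 1 ^ (p₀ + 1) * (d x ^ (-β) + 1))
      (volume.restrict Ω) := by
    have hone : IntegrableOn (fun _ => (1 : ℝ)) Ω := by
      simpa using hint 0 one_pos
    exact ((hint β hβ1).add hone).const_mul _
  refine integral_eq_of_dominated_of_integral_eq (l := atTop) _ one_ne_zero
    (Eventually.of_forall fun k => hnorm _ (hpn k)) ?_ hbound_int ?_
  · filter_upwards [hclose] with k ⟨hkβ, hkq⟩
    filter_upwards [hbound _ (hpn k)] with x ⟨hu₀, hu, _⟩
    rw [Real.norm_of_nonneg (by have := hd₀ x; positivity)]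
    exact abs_rpow_div_rpow_le_of_le_mul_rpow (hd₀ x) hu₀ hu hc.le (hpos _ (hpn k)) hkq hα.2.le
      (by rwa [mul_comm, ← le_div_iff₀ hα1])
  · filter_upwards [hae] with x hx
    exact tendsto_abs_rpow_div_rpow (hd₀ x) (hpos _ hp₀) hx hpnlim

theorem stmt18 {n : ℕ} (Ω : Set (EuclideanSpace ℝ (Fin n))) (hΩ : IsOpen Ω)
    (hb : Bornology.IsBounded Ω)
    (d : EuclideanSpace ℝ (Fin n) → ℝ) (hd : ∀ x, d x = Metric.infDist x (frontier Ω))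
    (I : Set ℝ) (hI : IsOpen I) (hI1 : I ⊆ Set.Ioi 1)
    (c α : ℝ) (hc : 0 < c) (hα : α ∈ Set.Ioo (0 : ℝ) 1)
    (u : ℝ → EuclideanSpace ℝ (Fin n) → ℝ)
    (hbound : ∀ p ∈ I, ∀ᵐ x ∂(volume.restrict Ω),
      0 ≤ u p x ∧ u p x ≤ c * d x ^ α ∧ ‖fderiv ℝ (u p) x‖ ≤ c * d x ^ (α - 1))
    (hnorm : ∀ p ∈ I, (∫ x in Ω, |u p x| ^ p / d x ^ p) = 1)
    (hint : ∀ β : ℝ, β < 1 → IntegrableOn (fun x => d x ^ (-β)) Ω)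
    (p₀ : ℝ) (hp₀ : p₀ ∈ I) (hα₀ : p₀ * (1 - α) < 1)
    (pn : ℕ → ℝ) (hpn : ∀ n, pn n ∈ I) (hpnlim : Tendsto pn atTop (𝓝 p₀))
    (u₀ : EuclideanSpace ℝ (Fin n) → ℝ)
    (hae : ∀ᵐ x ∂(volume.restrict Ω), Tendsto (fun n => u (pn n) x) atTop (𝓝 (u₀ x))) :
    (∫ x in Ω, |u₀ x| ^ p₀ / d x ^ p₀) = 1 :=
  stmt18_general Ω d hd I hI1 c α hc hα u hbound hnorm hint p₀ hp₀ hα₀ pn hpn hpnlim u₀ hae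
end
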